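/- arXiv:2311.01959 — 4 statements merged into one kernel-verified Lean document; each statement's English description precedes it below -/
import Mathlib

section
/- For every linear subspace W ⊆ ℝ^n and every nonzero z ∈ W, there exist h ≤ n and elementary vectors g^1, …, g^h of W, each conforming to z, such that z = Σ_{k=1}^h g^k and, for each i ∈ {1, …, h−1}, supp(g^i) \ (supp(g^{i+1}) ∪ ⋯ ∪ supp(g^h)) ≠ ∅ (i.e., z admits a conformal circuit decomposition). -/
open BigOperators Finset

noncomputable section

open Classical

/-- A nonzero `g ∈ W` is an elementary vector of `W` if no nonzero `h ∈ W`
has strictly smaller support. -/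
def IsElementaryVec {ι : Type*} (W : Submodule ℝ (ι → ℝ)) (g : ι → ℝ) : Prop :=
  g ∈ W ∧ g ≠ 0 ∧ ∀ h : ι → ℝ, h ∈ W → h ≠ 0 → ¬ ({i | h i ≠ 0} ⊂ {i | g i ≠ 0})

/-- The circuit imbalance measure `κ(W)`: the maximum of `|g j / g i|` over elementary
vectors `g` of `W` and `i, j ∈ supp(g)`, with `κ(W) := 1` for the trivial subspaces. -/
noncomputable def kappaSub {ι : Type*} (W : Submodule ℝ (ι → ℝ)) : ℝ :=
  if W = ⊥ ∨ W = ⊤ then 1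
  else sSup {t : ℝ | ∃ g : ι → ℝ, IsElementaryVec W g ∧
    ∃ i j : ι, g i ≠ 0 ∧ g j ≠ 0 ∧ t = |g j / g i|}

/-- `y` conforms to `x` if `x i * y i > 0` whenever `y i ≠ 0`. -/
def Conforms {ι : Type*} (x y : ι → ℝ) : Prop :=
  ∀ i, y i ≠ 0 → x i * y i > 0

/-- The extended subspace `X_A := ker (A | −I_m) ⊆ ℝ^{n+m}`. -/
noncomputable def XA {m n : ℕ} (A : Matrix (Fin m) (Fin n) ℝ) :
    Submodule ℝ (Fin n ⊕ Fin m → ℝ) :=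
  LinearMap.ker (Matrix.fromCols A (-1)).mulVecLin

/-!
Subtract from `z` a positive multiple `α • g` of an elementary vector `g` conforming to `z`,
with `α` as large as the ratio test allows: the remainder still conforms to `z` and vanishes at
some coordinate `j` of `supp g`. Every later summand conforms to the remainder, hence vanishes
at `j`, and since supports shrink there are at most `|supp z| ≤ n` summands. A conforming
elementary vector exists by the same ratio test: if `z` is not elementary, a vector of `W` with
smaller support, signed to agree with `z` somewhere, leaves a conforming remainder with smaller
support.
-/

open Function

variable {ι : Type*}

namespace Conforms

theorem refl (z : ι → ℝ) : Conforms z z :=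
  fun _ hz => mul_self_pos.mpr hz

theorem ne_zero {z w : ι → ℝ} (hzw : Conforms z w) {i : ι} (hw : w i ≠ 0) : z i ≠ 0 := by
  intro hz
  simpa [hz] using hzw i hw

theorem support_subset {z w : ι → ℝ} (hzw : Conforms z w) : support w ⊆ support z :=
  fun _ => hzw.ne_zero

theorem trans {z w g : ι → ℝ} (hzw : Conforms z w) (hwg : Conforms w g) : Conforms z g := by
  intro i hg
  have hwi := hwg i hg
  have hzi := hzw i (hwg.ne_zero hg)
  nlinarith [mul_pos hzi hwi, mul_self_pos.mpr (hwg.ne_zero hg)]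

theorem smul {z g : ι → ℝ} (hzg : Conforms z g) {α : ℝ} (hα : 0 < α) : Conforms z (α • g) := by
  intro i hi
  have hgi : g i ≠ 0 := right_ne_zero_of_mul hi
  have := hzg i hgi
  simp only [Pi.smul_apply, smul_eq_mul]
  nlinarith

theorem ncard_support_lt [Finite ι] {z w : ι → ℝ} (hzw : Conforms z w) {i : ι}
    (hz : z i ≠ 0) (hw : w i = 0) : (support w).ncard < (support z).ncard :=
  Set.ncard_lt_ncard <| Set.ssubset_iff_subset_ne.mpr
    ⟨hzw.support_subset, fun h => (h ▸ hz : i ∈ support w) hw⟩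

end Conforms

theorem IsElementaryVec.smul {W : Submodule ℝ (ι → ℝ)} {g : ι → ℝ} (hg : IsElementaryVec W g)
    {α : ℝ} (hα : α ≠ 0) : IsElementaryVec W (α • g) := by
  obtain ⟨hgW, hg0, hmin⟩ := hg
  refine ⟨W.smul_mem α hgW, smul_ne_zero hα hg0, ?_⟩
  rw [show {i | (α • g) i ≠ 0} = support (α • g) from rfl, support_const_smul_of_ne_zero α g hα]
  exact hmin

/-- Ratio test: moving from `z` towards `-v` stops at the first coordinate where `z - α • v`
vanishes, and up to that point no coordinate changes sign. -/
theorem exists_conforms_sub_smul [Finite ι] {z v : ι → ℝ} (hvz : support v ⊆ support z)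
    (hpos : ∃ i, 0 < z i * v i) :
    ∃ α > 0, ∃ i, v i ≠ 0 ∧ z i = α * v i ∧ Conforms z (z - α • v) := by
  obtain ⟨i₀, hi₀, hmin⟩ := Set.exists_min_image {i | 0 < z i * v i} (fun i => z i / v i)
    (Set.toFinite _) hpos
  have hvi₀ : v i₀ ≠ 0 := right_ne_zero_of_mul hi₀.ne'
  have hα : 0 < z i₀ / v i₀ := by
    rw [← mul_div_mul_right _ _ hvi₀]
    exact div_pos hi₀ (mul_self_pos.mpr hvi₀)
  set α := z i₀ / v i₀
  have hbound : ∀ i, α * (z i * v i) ≤ z i * z i := by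
    intro i
    rcases le_or_gt (z i * v i) 0 with hle | hlt
    · nlinarith [mul_self_nonneg (z i)]
    · calc α * (z i * v i) ≤ z i / v i * (z i * v i) :=
            mul_le_mul_of_nonneg_right (hmin i hlt) hlt.le
        _ = z i * z i := by field_simp [right_ne_zero_of_mul hlt.ne']
  refine ⟨α, hα, i₀, hvi₀, (div_mul_cancel₀ _ hvi₀).symm, fun i hi => ?_⟩
  have hzi : z i ≠ 0 := by
    intro hzi
    have hvi : v i = 0 := by_contra fun hvi => hvz hvi hzi
    simp [hzi, hvi] at hi
  simp only [Pi.sub_apply, Pi.smul_apply, smul_eq_mul] at hi ⊢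
  exact lt_of_le_of_ne (by nlinarith [hbound i]) (mul_ne_zero hzi hi).symm

theorem exists_isElementaryVec_conforms [Finite ι] {W : Submodule ℝ (ι → ℝ)} {z : ι → ℝ}
    (hzW : z ∈ W) (hz : z ≠ 0) : ∃ g, IsElementaryVec W g ∧ Conforms z g := by
  by_cases hmin : ∀ v ∈ W, v ≠ 0 → ¬ support v ⊂ support z
  · exact ⟨z, ⟨hzW, hz, hmin⟩, Conforms.refl z⟩
  push Not at hmin
  obtain ⟨v, hvW, hv0, hvz⟩ := hmin
  obtain ⟨j, hj⟩ := Function.ne_iff.mp hv0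
  -- rescaling `v` by `z j * v j` makes its `j`-th coordinate agree in sign with `z j`
  set c := z j * v j
  have hc : c ≠ 0 := mul_ne_zero (hvz.subset hj) hj
  have hsupp : support (c • v) = support v := support_const_smul_of_ne_zero c v hc
  obtain ⟨α, hα, i₀, hvi₀, hzi₀, hzw⟩ :=
    exists_conforms_sub_smul (hsupp ▸ hvz.subset) ⟨j, by
      rw [Pi.smul_apply, smul_eq_mul, mul_left_comm]; exact mul_self_pos.mpr hc⟩
  have hwW : z - α • c • v ∈ W := W.sub_mem hzW (W.smul_mem _ (W.smul_mem _ hvW))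
  have hw0 : z - α • c • v ≠ 0 := by
    rw [Ne, sub_eq_zero, smul_smul]
    intro h
    apply hvz.ne
    rw [h, support_const_smul_of_ne_zero _ _ (mul_ne_zero hα.ne' hc)]
  have hlt : (support (z - α • c • v)).ncard < (support z).ncard :=
    hzw.ncard_support_lt (hvz.subset (hsupp ▸ hvi₀))
      (show z i₀ - α * (c • v) i₀ = 0 by rw [← hzi₀, sub_self])
  obtain ⟨g, hg, hwg⟩ := exists_isElementaryVec_conforms hwW hw0
  exact ⟨g, hg, hzw.trans hwg⟩
termination_by (support z).ncard

def IsConformalCircuitDecomposition (W : Submodule ℝ (ι → ℝ)) (z : ι → ℝ) {h : ℕ}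
    (g : Fin h → ι → ℝ) : Prop :=
  (∀ k, IsElementaryVec W (g k)) ∧ (∀ k, Conforms z (g k)) ∧ z = ∑ k, g k ∧
    ∀ i, ∃ j, g i j ≠ 0 ∧ ∀ k, i < k → g k j = 0

theorem IsConformalCircuitDecomposition.cons {W : Submodule ℝ (ι → ℝ)} {z g₀ : ι → ℝ} {h : ℕ}
    {g : Fin h → ι → ℝ} (hg : IsConformalCircuitDecomposition W (z - g₀) g)
    (hg₀ : IsElementaryVec W g₀) (hzg₀ : Conforms z g₀) (hzw : Conforms z (z - g₀)) {j : ι}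
    (hj : g₀ j ≠ 0) (hzj : z j = g₀ j) :
    IsConformalCircuitDecomposition W z (Fin.cons g₀ g : Fin (h + 1) → ι → ℝ) := by
  obtain ⟨hel, hconf, hsum, hcirc⟩ := hg
  refine ⟨Fin.cases hg₀ hel, Fin.cases hzg₀ fun k => hzw.trans (hconf k), ?_,
    Fin.cases ⟨j, hj, ?_⟩ ?_⟩
  · rw [Fin.sum_cons, ← hsum, add_sub_cancel]
  · intro k hk
    obtain ⟨k, rfl⟩ := Fin.exists_succ_eq.mpr hk.ne'
    exact by_contra fun hk => (hconf k).ne_zero hk (sub_eq_zero.mpr hzj)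
  · intro i
    obtain ⟨j, hj, hlater⟩ := hcirc i
    exact ⟨j, hj, Fin.cases (fun h0 => absurd h0 (Fin.succ_pos i).not_gt)
      fun k hk => hlater k (Fin.succ_lt_succ_iff.mp hk)⟩

theorem exists_isConformalCircuitDecomposition [Finite ι] {W : Submodule ℝ (ι → ℝ)}
    {z : ι → ℝ} (hzW : z ∈ W) : ∃ (h : ℕ) (g : Fin h → ι → ℝ),
      h ≤ (support z).ncard ∧ IsConformalCircuitDecomposition W z g := by
  by_cases hz : z = 0
  · subst hz
    exact ⟨0, Fin.elim0, Nat.zero_le _, fun k => k.elim0, fun k => k.elim0, by simp,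
      fun k => k.elim0⟩
  obtain ⟨g, hg, hzg⟩ := exists_isElementaryVec_conforms hzW hz
  obtain ⟨j, hj⟩ := Function.ne_iff.mp hg.2.1
  obtain ⟨α, hα, i₀, hgi₀, hzi₀, hzw⟩ := exists_conforms_sub_smul hzg.support_subset ⟨j, hzg j hj⟩
  have hwW : z - α • g ∈ W := W.sub_mem hzW (W.smul_mem α hg.1)
  have hlt : (support (z - α • g)).ncard < (support z).ncard :=
    hzw.ncard_support_lt (hzg.ne_zero hgi₀) (sub_eq_zero.mpr hzi₀)
  obtain ⟨h, g', hh, hg'⟩ := exists_isConformalCircuitDecomposition hwW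
  exact ⟨h + 1, _, by omega,
    hg'.cons (hg.smul hα.ne') (hzg.smul hα) hzw (mul_ne_zero hα.ne' hgi₀) hzi₀⟩
termination_by (support z).ncard

theorem conformal_circuit_decomposition_general {n : ℕ} (W : Submodule ℝ (Fin n → ℝ))
    (z : Fin n → ℝ) (hzW : z ∈ W) :
    ∃ (h : ℕ) (g : Fin h → Fin n → ℝ), h ≤ n ∧
      (∀ k, IsElementaryVec W (g k)) ∧
      (∀ k, Conforms z (g k)) ∧
      z = ∑ k, g k ∧
      (∀ i : Fin h, (i : ℕ) < h - 1 →
        ∃ j : Fin n, g i j ≠ 0 ∧ ∀ k : Fin h, i < k → g k j = 0) := by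
  obtain ⟨h, g, hh, hel, hconf, hsum, hcirc⟩ := exists_isConformalCircuitDecomposition hzW
  exact ⟨h, g, hh.trans ((Set.ncard_le_card _).trans_eq (Nat.card_fin n)), hel, hconf, hsum,
    fun i _ => hcirc i⟩

/-- Every nonzero `z` in a linear subspace `W ⊆ ℝ^n` admits a conformal
circuit decomposition `z = Σ_{k=1}^h g^k` with `h ≤ n`, each `g^k` an elementary vector
of `W` conforming to `z`, and for each `i < h − 1` the support of `g^i` is not covered
by the supports of the later vectors. -/
theorem conformal_circuit_decomposition {n : ℕ} (W : Submodule ℝ (Fin n → ℝ))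
    (z : Fin n → ℝ) (hzW : z ∈ W) (hz : z ≠ 0) :
    ∃ (h : ℕ) (g : Fin h → Fin n → ℝ), h ≤ n ∧
      (∀ k, IsElementaryVec W (g k)) ∧
      (∀ k, Conforms z (g k)) ∧
      z = ∑ k, g k ∧
      (∀ i : Fin h, (i : ℕ) < h - 1 →
        ∃ j : Fin n, g i j ≠ 0 ∧ ∀ k : Fin h, i < k → g k j = 0) :=
  conformal_circuit_decomposition_general W z hzW
end
end

section
/- For every nonzero matrix A ∈ ℝ^{m×n}, one has n·κ(X_A)·‖A‖₁ ≥ 1. -/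
open BigOperators Finset

noncomputable section

open Classical

/-!
Each column of `A` gives an elementary vector of `X_A`: the vector `e_j ⊕ A e_j` lies in `X_A`,
and any vector of `X_A` vanishing outside its support is determined by its `j`-th coordinate,
hence a multiple of it. For an entry `a_{ij} ≠ 0` its coordinates `1` and `a_{ij}` give
`κ(X_A) ≥ 1 / |a_{ij}| ≥ 1 / ‖A‖₁`, which is even stronger than the claim since `n ≥ 1`.
-/

def circuitRatios {ι : Type*} (W : Submodule ℝ (ι → ℝ)) : Set ℝ :=
  {t : ℝ | ∃ g : ι → ℝ, IsElementaryVec W g ∧ ∃ i j : ι, g i ≠ 0 ∧ g j ≠ 0 ∧ t = |g j / g i|}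

section Elementary

variable {ι : Type*} {W : Submodule ℝ (ι → ℝ)} {g h : ι → ℝ}

theorem kappaSub_eq_sSup_circuitRatios (hbot : W ≠ ⊥) (htop : W ≠ ⊤) :
    kappaSub W = sSup (circuitRatios W) := by
  rw [kappaSub, if_neg (not_or.2 ⟨hbot, htop⟩), circuitRatios]

theorem IsElementaryVec.exists_eq_smul_of_support_subset (hg : IsElementaryVec W g) (hh : h ∈ W)
    (hsupp : {i | h i ≠ 0} ⊆ {i | g i ≠ 0}) : ∃ c : ℝ, h = c • g := by
  obtain ⟨i, hi⟩ := Function.ne_iff.1 hg.2.1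
  refine ⟨h i / g i, sub_eq_zero.1 (by_contra fun hne => hg.2.2 _ ?_ hne ⟨?_, fun hsub => ?_⟩)⟩
  · exact W.sub_mem hh (W.smul_mem _ hg.1)
  · intro k hk
    by_contra hgk
    have hhk : h k = 0 := not_not.1 fun hhk => hgk (hsupp hhk)
    simp_all
  · exact hsub hi (by simp [div_mul_cancel₀ _ hi])

theorem IsElementaryVec.abs_div_eq_of_support_eq {g' : ι → ℝ} (hg : IsElementaryVec W g)
    (hg' : IsElementaryVec W g') (hsupp : {k | g k ≠ 0} = {k | g' k ≠ 0}) (i j : ι) :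
    |g j / g i| = |g' j / g' i| := by
  obtain ⟨c, rfl⟩ := hg.exists_eq_smul_of_support_subset hg'.1 hsupp.ge
  have hc : c ≠ 0 := by
    rintro rfl
    exact hg'.2.1 (zero_smul ℝ g)
  simp only [Pi.smul_apply, smul_eq_mul, mul_div_mul_left _ _ hc]

/-- Proportionality of elementary vectors with equal supports makes a ratio depend only on the
support and the two indices. -/
theorem finite_circuitRatios [Finite ι] : (circuitRatios W).Finite := by
  let ratio : Set ι × ι × ι → ℝ := fun ⟨S, i, j⟩ =>
    if hS : ∃ g, IsElementaryVec W g ∧ {k | g k ≠ 0} = S then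
      |hS.choose j / hS.choose i| else 0
  refine (Set.finite_range ratio).subset ?_
  rintro t ⟨g, hg, i, j, -, -, rfl⟩
  have hS : ∃ g', IsElementaryVec W g' ∧ {k | g' k ≠ 0} = {k | g k ≠ 0} := ⟨g, hg, rfl⟩
  refine ⟨({k | g k ≠ 0}, i, j), ?_⟩
  simp only [ratio, dif_pos hS]
  exact hS.choose_spec.1.abs_div_eq_of_support_eq hg hS.choose_spec.2 i j

theorem abs_div_le_kappaSub [Finite ι] (htop : W ≠ ⊤) (hg : IsElementaryVec W g) {i j : ι}
    (hi : g i ≠ 0) (hj : g j ≠ 0) : |g j / g i| ≤ kappaSub W := by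
  have hbot : W ≠ ⊥ := fun h => hg.2.1 ((Submodule.mem_bot ℝ).1 (h ▸ hg.1))
  rw [kappaSub_eq_sSup_circuitRatios hbot htop]
  exact le_csSup finite_circuitRatios.bddAbove ⟨g, hg, i, j, hi, hj, rfl⟩

end Elementary

section XA

variable {m n : ℕ} (A : Matrix (Fin m) (Fin n) ℝ)

theorem mem_XA_iff (v : Fin n ⊕ Fin m → ℝ) :
    v ∈ XA A ↔ ∀ i, v (Sum.inr i) = ∑ j, A i j * v (Sum.inl j) := by
  simp only [XA, LinearMap.mem_ker, Matrix.mulVecLin_apply, funext_iff, Matrix.mulVec,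
    Matrix.fromCols, dotProduct, Fintype.sum_sum_type, Pi.zero_apply, Matrix.of_apply,
    Sum.elim_inl, Sum.elim_inr, Matrix.neg_apply, Matrix.one_apply, neg_mul, ite_mul, one_mul,
    zero_mul, Finset.sum_neg_distrib, Finset.sum_ite_eq, Finset.mem_univ, if_true,
    ← sub_eq_add_neg, sub_eq_zero]
  exact forall_congr' fun _ => eq_comm

theorem XA_ne_top (hm : 0 < m) : XA A ≠ ⊤ := by
  intro htop
  have hmem := (mem_XA_iff A (Sum.elim 0 (Pi.single ⟨0, hm⟩ 1))).1 (htop ▸ trivial) ⟨0, hm⟩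
  simp at hmem

def XA.column (j : Fin n) : Fin n ⊕ Fin m → ℝ :=
  Sum.elim (Pi.single j 1) (fun i => A i j)

theorem XA.column_mem (j : Fin n) : XA.column A j ∈ XA A := by
  simp [mem_XA_iff, XA.column, Pi.single_apply]

theorem XA.eq_smul_column_of_support_subset {j : Fin n} {h : Fin n ⊕ Fin m → ℝ} (hh : h ∈ XA A)
    (hsupp : {k | h k ≠ 0} ⊆ {k | XA.column A j k ≠ 0}) :
    h = h (Sum.inl j) • XA.column A j := by
  have hzero : ∀ k ≠ j, h (Sum.inl k) = 0 := fun k hk =>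
    not_not.1 fun hne => by simpa [XA.column, hk] using hsupp hne
  funext k
  rcases k with k | i
  · by_cases hk : k = j
    · simp [hk, XA.column]
    · simp [hzero k hk, hk, XA.column]
  · rw [(mem_XA_iff A h).1 hh i,
      Finset.sum_eq_single j (fun k _ hk => by rw [hzero k hk, mul_zero]) (by simp)]
    simp [XA.column, mul_comm]

theorem XA.isElementaryVec_column (j : Fin n) : IsElementaryVec (XA A) (XA.column A j) := by
  refine ⟨XA.column_mem A j, Function.ne_iff.2 ⟨Sum.inl j, by simp [XA.column]⟩, ?_⟩
  intro h hh hne hssub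
  have heq := XA.eq_smul_column_of_support_subset A hh hssub.1
  have hc : h (Sum.inl j) ≠ 0 := fun hc => hne (by rw [heq, hc, zero_smul])
  refine hssub.2 fun k hk => ?_
  rw [heq]
  simpa [hc] using hk

end XA

theorem abs_le_iSup_sum_abs {α β : Type*} [Fintype α] [Finite β] (A : Matrix α β ℝ) (i : α)
    (j : β) : |A i j| ≤ ⨆ j, ∑ i, |A i j| :=
  (Finset.single_le_sum (fun i _ => abs_nonneg (A i j)) (Finset.mem_univ i)).trans
    (le_ciSup (f := fun j => ∑ i, |A i j|) (Set.finite_range _).bddAbove j)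

/-- For every nonzero matrix `A ∈ ℝ^{m×n}`, `n·κ(X_A)·‖A‖₁ ≥ 1`,
where `‖A‖₁ = max_j Σ_i |a_{ij}|` is the maximum column ℓ₁-norm. -/
theorem kappa_matNorm_lower_bound {m n : ℕ} (A : Matrix (Fin m) (Fin n) ℝ) (hA : A ≠ 0) :
    1 ≤ (n : ℝ) * kappaSub (XA A) * (⨆ j, ∑ i, |A i j|) := by
  obtain ⟨i, j, hij⟩ : ∃ i j, A i j ≠ 0 := by
    by_contra! h
    exact hA (Matrix.ext h)
  have hκ : |1 / A i j| ≤ kappaSub (XA A) := by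
    simpa [XA.column] using abs_div_le_kappaSub (XA_ne_top A i.pos)
      (XA.isElementaryVec_column A j) (i := Sum.inr i) (j := Sum.inl j)
      (by simpa [XA.column] using hij) (by simp [XA.column])
  have hκC : 1 ≤ kappaSub (XA A) * ⨆ j, ∑ i, |A i j| :=
    calc (1 : ℝ) = |1 / A i j| * |A i j| := by
          rw [abs_div, abs_one, one_div_mul_cancel (abs_ne_zero.2 hij)]
      _ ≤ kappaSub (XA A) * ⨆ j, ∑ i, |A i j| :=
          mul_le_mul hκ (abs_le_iSup_sum_abs A i j) (abs_nonneg _) ((abs_nonneg _).trans hκ)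
  have hn : (1 : ℝ) ≤ n := Nat.one_le_cast.2 j.pos
  nlinarith
end
end

section
/- Let A ∈ ℝ^{m×n} with ‖A‖₁ > 0, b ∈ ℝ^m, u ∈ ℝ^n with u ≥ 0, and ĉ ∈ ℝ^n. Then the function τ ↦ F*_τ is non-increasing and continuous on ℝ. Moreover, if the system Ax = b, 0 ≤ x ≤ u is feasible, then Φ(A,b,ĉ,u) = min{τ ∈ ℝ : F*_τ = 0}; that is, the optimal value of LP(A,b,ĉ,u) is the smallest τ for which F*_τ = 0. -/
open BigOperators Finset

noncomputable section

open Classical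

/-- The optimal value `Φ(A,b,c,u)` of `LP(A,b,c,u)`:
`min ⟨c,x⟩  s.t.  Ax = b, 0 ≤ x ≤ u`. -/
noncomputable def PhiLP {m : ℕ} {ι : Type*} [Fintype ι] (A : Matrix (Fin m) ι ℝ)
    (b : Fin m → ℝ) (c u : ι → ℝ) : ℝ :=
  sInf {v : ℝ | ∃ x : ι → ℝ, A.mulVec x = b ∧ 0 ≤ x ∧ x ≤ u ∧ v = ∑ i, c i * x i}

/-- `θ(x,π,σ) = Σ_{i : c_i − A_i^⊤π > σ} x_i + Σ_{i : c_i − A_i^⊤π < −σ} (u_i − x_i)`. -/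
noncomputable def thetaLP {m n : ℕ} (A : Matrix (Fin m) (Fin n) ℝ) (c u x : Fin n → ℝ)
    (π : Fin m → ℝ) (σ : ℝ) : ℝ :=
  (∑ i ∈ Finset.univ.filter (fun i => c i - ∑ j, A j i * π j > σ), x i) +
    ∑ i ∈ Finset.univ.filter (fun i => c i - ∑ j, A j i * π j < -σ), (u i - x i)

/-- The potential function
`F_τ(x) = ½(max{0, ⟨ĉ,x⟩ − τ})² + (1/(2‖A‖₁²))‖Ax − b‖₂²`. -/
noncomputable def Ftau {m n : ℕ} (A : Matrix (Fin m) (Fin n) ℝ) (b : Fin m → ℝ)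
    (chat : Fin n → ℝ) (τ : ℝ) (x : Fin n → ℝ) : ℝ :=
  (1 / 2) * (max 0 ((∑ i, chat i * x i) - τ)) ^ 2 +
    (1 / (2 * (⨆ j, ∑ i, |A i j|) ^ 2)) * ∑ j, (A.mulVec x j - b j) ^ 2

/-- `F*_τ = min{F_τ(x) : 0 ≤ x ≤ u}`. -/
noncomputable def Fstar {m n : ℕ} (A : Matrix (Fin m) (Fin n) ℝ) (b : Fin m → ℝ)
    (u chat : Fin n → ℝ) (τ : ℝ) : ℝ :=
  sInf {v : ℝ | ∃ x : Fin n → ℝ, 0 ≤ x ∧ x ≤ u ∧ v = Ftau A b chat τ x}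

/-- `α(x) = max{0, ⟨ĉ,x⟩ − τ}`. -/
noncomputable def alphaF {n : ℕ} (chat : Fin n → ℝ) (τ : ℝ) (x : Fin n → ℝ) : ℝ :=
  max 0 ((∑ i, chat i * x i) - τ)

/-- `β(x) = ‖Ax − b‖₂ / ‖A‖₁`. -/
noncomputable def betaF {m n : ℕ} (A : Matrix (Fin m) (Fin n) ℝ) (b : Fin m → ℝ)
    (x : Fin n → ℝ) : ℝ :=
  Real.sqrt (∑ j, (A.mulVec x j - b j) ^ 2) / (⨆ j, ∑ i, |A i j|)

/-!
`F*_τ` is the minimum over the compact box `[0, u]` of `F_τ(x)`, which is jointly continuous in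
`(τ, x)` and antitone in `τ`; this gives monotonicity and continuity. Since `‖A‖₁ > 0`,
`F_τ(x) = 0` exactly when `Ax = b` and `⟨ĉ, x⟩ ≤ τ`. Both minima being attained, `F*_τ = 0` iff
the LP has a feasible point of value at most `τ`, i.e. iff `Φ ≤ τ`.
-/

open scoped Matrix

def lpFeasibleSet {m : ℕ} {ι : Type*} [Fintype ι] (A : Matrix (Fin m) ι ℝ) (b : Fin m → ℝ) (u : ι → ℝ) :
    Set (ι → ℝ) :=
  {x | A *ᵥ x = b} ∩ Set.Icc 0 u

section LinearProgram

variable {m : ℕ} {ι : Type*} [Fintype ι] (A : Matrix (Fin m) ι ℝ) (b : Fin m → ℝ) (c u : ι → ℝ)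

theorem isCompact_lpFeasibleSet : IsCompact (lpFeasibleSet A b u) :=
  isCompact_Icc.inter_left <|
    isClosed_eq (continuous_const.matrix_mulVec continuous_id) continuous_const

theorem PhiLP_eq_sInf_image : PhiLP A b c u = sInf ((c ⬝ᵥ ·) '' lpFeasibleSet A b u) := by
  unfold PhiLP lpFeasibleSet
  congr 1
  ext v
  simp only [Set.mem_ofPred_eq, Set.mem_image, Set.mem_inter_iff, Set.mem_Icc, and_assoc,
    eq_comm (a := v), dotProduct]

theorem isCompact_objective_image : IsCompact ((c ⬝ᵥ ·) '' lpFeasibleSet A b u) :=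
  (isCompact_lpFeasibleSet A b u).image (continuous_const.dotProduct continuous_id)

theorem PhiLP_le {x : ι → ℝ} (hx : x ∈ lpFeasibleSet A b u) : PhiLP A b c u ≤ c ⬝ᵥ x := by
  rw [PhiLP_eq_sInf_image]
  exact csInf_le (isCompact_objective_image A b c u).bddBelow ⟨x, hx, rfl⟩

theorem exists_dotProduct_eq_PhiLP (hfeas : (lpFeasibleSet A b u).Nonempty) :
    ∃ x ∈ lpFeasibleSet A b u, c ⬝ᵥ x = PhiLP A b c u := by
  rw [PhiLP_eq_sInf_image]
  exact (isCompact_objective_image A b c u).sInf_mem (hfeas.image _)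

end LinearProgram

section Potential

variable {m n : ℕ} (A : Matrix (Fin m) (Fin n) ℝ) (b : Fin m → ℝ) (u chat : Fin n → ℝ)

theorem Ftau_nonneg (τ : ℝ) (x : Fin n → ℝ) : 0 ≤ Ftau A b chat τ x := by
  unfold Ftau
  have : 0 ≤ ∑ j, ((A *ᵥ x) j - b j) ^ 2 := Finset.sum_nonneg fun j _ => sq_nonneg _
  positivity

theorem continuous_Ftau : Continuous ↿(Ftau A b chat) := by
  have : Continuous fun x : Fin n → ℝ => A *ᵥ x := continuous_const.matrix_mulVec continuous_id
  unfold Ftau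
  fun_prop

theorem antitone_Ftau (x : Fin n → ℝ) : Antitone fun τ => Ftau A b chat τ x := by
  intro τ τ' h
  dsimp only
  unfold Ftau
  gcongr

theorem Ftau_eq_zero_iff (hA : 0 < ⨆ j, ∑ i, |A i j|) {τ : ℝ} {x : Fin n → ℝ} :
    Ftau A b chat τ x = 0 ↔ chat ⬝ᵥ x ≤ τ ∧ A *ᵥ x = b := by
  have hres : 0 ≤ ∑ j, ((A *ᵥ x) j - b j) ^ 2 := Finset.sum_nonneg fun j _ => sq_nonneg _
  have hκ : 1 / (2 * (⨆ j, ∑ i, |A i j|) ^ 2) ≠ 0 := by positivity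
  unfold Ftau
  rw [add_eq_zero_iff_of_nonneg (by positivity) (by positivity), mul_eq_zero, mul_eq_zero,
    or_iff_right (by norm_num), or_iff_right hκ, sq_eq_zero_iff, max_eq_left_iff, sub_nonpos,
    Finset.sum_eq_zero_iff_of_nonneg fun j _ => sq_nonneg _, funext_iff]
  simp only [Finset.mem_univ, true_implies, sq_eq_zero_iff, sub_eq_zero]
  rfl

theorem Fstar_eq_sInf_image (τ : ℝ) :
    Fstar A b u chat τ = sInf (Ftau A b chat τ '' Set.Icc 0 u) := by
  unfold Fstar
  congr 1
  ext v
  simp only [Set.mem_ofPred_eq, Set.mem_image, Set.mem_Icc, and_assoc, eq_comm (a := v)]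

theorem Fstar_nonneg (τ : ℝ) : 0 ≤ Fstar A b u chat τ := by
  rw [Fstar_eq_sInf_image]
  exact Real.sInf_nonneg <| Set.forall_mem_image.2 fun x _ => Ftau_nonneg A b chat τ x

theorem Fstar_le {x : Fin n → ℝ} (hx : x ∈ Set.Icc 0 u) (τ : ℝ) :
    Fstar A b u chat τ ≤ Ftau A b chat τ x := by
  rw [Fstar_eq_sInf_image]
  exact csInf_le ⟨0, Set.forall_mem_image.2 fun y _ => Ftau_nonneg A b chat τ y⟩ ⟨x, hx, rfl⟩

theorem exists_Ftau_eq_Fstar (hu : 0 ≤ u) (τ : ℝ) :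
    ∃ x ∈ Set.Icc 0 u, Ftau A b chat τ x = Fstar A b u chat τ := by
  have hcont : Continuous (Ftau A b chat τ) := (continuous_Ftau A b chat).comp (.prodMk_right τ)
  rw [Fstar_eq_sInf_image]
  exact (isCompact_Icc.image hcont).sInf_mem ((Set.nonempty_Icc.2 hu).image _)

theorem antitone_Fstar : Antitone (Fstar A b u chat) := by
  intro τ τ' h
  simp only [Fstar_eq_sInf_image, sInf_image']
  exact ciInf_mono ⟨0, Set.forall_mem_range.2 fun x => Ftau_nonneg A b chat τ' x⟩
    fun x => antitone_Ftau A b chat x h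

theorem continuous_Fstar : Continuous (Fstar A b u chat) := by
  simp only [funext (Fstar_eq_sInf_image A b u chat)]
  exact isCompact_Icc.continuous_sInf (continuous_Ftau A b chat)

end Potential

theorem Fstar_monotone_continuous_and_min_general {m n : ℕ} (A : Matrix (Fin m) (Fin n) ℝ)
    (b : Fin m → ℝ) (u : Fin n → ℝ)
    (hA : 0 < ⨆ j, ∑ i, |A i j|) (chat : Fin n → ℝ) :
    Antitone (fun τ : ℝ => Fstar A b u chat τ) ∧
    Continuous (fun τ : ℝ => Fstar A b u chat τ) ∧
    ((∃ x : Fin n → ℝ, A.mulVec x = b ∧ 0 ≤ x ∧ x ≤ u) →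
      IsLeast {τ : ℝ | Fstar A b u chat τ = 0} (PhiLP A b chat u)) := by
  refine ⟨antitone_Fstar A b u chat, continuous_Fstar A b u chat, ?_⟩
  rintro ⟨x₀, hx₀b, hx₀0, hx₀u⟩
  obtain ⟨x, hx, hxΦ⟩ := exists_dotProduct_eq_PhiLP A b chat u ⟨x₀, hx₀b, hx₀0, hx₀u⟩
  refine ⟨le_antisymm ?_ (Fstar_nonneg A b u chat _), fun τ hτ => ?_⟩
  · calc Fstar A b u chat (PhiLP A b chat u) ≤ Ftau A b chat (PhiLP A b chat u) x :=
          Fstar_le A b u chat hx.2 _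
      _ = 0 := (Ftau_eq_zero_iff A b chat hA).2 ⟨hxΦ.le, hx.1⟩
  · obtain ⟨y, hy, hyτ⟩ := exists_Ftau_eq_Fstar A b u chat (hx₀0.trans hx₀u) τ
    rw [hτ.out, Ftau_eq_zero_iff A b chat hA] at hyτ
    exact (PhiLP_le A b chat u ⟨hyτ.2, hy⟩).trans hyτ.1

/-- `τ ↦ F*_τ` is non-increasing and continuous; and if
`Ax = b, 0 ≤ x ≤ u` is feasible, then `Φ(A,b,ĉ,u)` is the smallest `τ` with
`F*_τ = 0`. -/
theorem Fstar_monotone_continuous_and_min {m n : ℕ} (A : Matrix (Fin m) (Fin n) ℝ)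
    (b : Fin m → ℝ) (u : Fin n → ℝ) (hu : 0 ≤ u)
    (hA : 0 < ⨆ j, ∑ i, |A i j|) (chat : Fin n → ℝ) :
    Antitone (fun τ : ℝ => Fstar A b u chat τ) ∧
    Continuous (fun τ : ℝ => Fstar A b u chat τ) ∧
    ((∃ x : Fin n → ℝ, A.mulVec x = b ∧ 0 ≤ x ∧ x ≤ u) →
      IsLeast {τ : ℝ | Fstar A b u chat τ = 0} (PhiLP A b chat u)) :=
  Fstar_monotone_continuous_and_min_general A b u hA chat
end
end

section
/- Let A ∈ ℝ^{m×n} with ‖A‖₁ > 0, b ∈ ℝ^m, u ∈ ℝ^n with u ≥ 0, c ∈ ℝ^n with c ≠ 0, ε > 0, and set σ := 2ε‖c‖_∞. Let ĉ ∈ ℝ^n satisfy ‖ĉ‖_∞ ≤ 1 and |ĉ_i − c_i/‖c‖_∞| ≤ ε for all i. Let ζ > 0, τ ∈ ℝ, and let x be a ζ-approximate minimizer of F_τ such that ε·α(x) ≥ 4√ζ. Define π := (‖c‖_∞/(‖A‖₁²·α(x)))·(b − Ax). Then θ(x, π, σ) := Σ_{i : c_i − A_i^⊤π > σ} x_i +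 Σ_{i : c_i − A_i^⊤π < −σ} (u_i − x_i) ≤ n√ζ/2. -/
open BigOperators Finset

noncomputable section

open Classical

/-! Along each coordinate `F_τ` has curvature at most `1` (`|ĉ_i| ≤ 1` and `‖A_i‖₂ ≤ ‖A‖₁`), so
`F_τ(x + t e_i) ≤ F_τ(x) + t ∂_iF_τ(x) + t²`. Scaling the reduced cost `c_i − A_iᵀπ` by
`α(x)/‖c‖_∞` gives `∂_iF_τ(x)` up to the rounding error `α(x)(c_i/‖c‖_∞ − ĉ_i)`, so a reduced cost
above `σ` forces `∂_iF_τ(x) > εα(x) ≥ 4√ζ`. If moreover `x_i > √ζ/2`, the step `t = −√ζ/2` would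
decrease `F_τ` by more than `ζ`, contradicting `ζ`-optimality; symmetrically for reduced costs
below `−σ` and `u_i − x_i`. Each coordinate thus contributes at most `√ζ/2` to `θ`. -/

def FtauGrad {m n : ℕ} (A : Matrix (Fin m) (Fin n) ℝ) (b : Fin m → ℝ)
    (chat : Fin n → ℝ) (τ : ℝ) (x : Fin n → ℝ) (i : Fin n) : ℝ :=
  alphaF chat τ x * chat i +
    (1 / (⨆ j, ∑ i, |A i j|) ^ 2) * ∑ j, A j i * (A.mulVec x j - b j)

lemma sq_max_zero_add_le (s d : ℝ) : max 0 (s + d) ^ 2 ≤ (max 0 s + d) ^ 2 := by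
  rcases le_total 0 (s + d) with h | h
  · rw [max_eq_right h]
    exact pow_le_pow_left₀ h (by linarith [le_max_right 0 s]) 2
  · simpa [max_eq_left h] using sq_nonneg (max 0 s + d)

lemma sum_sq_col_le_sq_iSup_sum_abs {m n : ℕ} (A : Matrix (Fin m) (Fin n) ℝ) (i : Fin n) :
    ∑ j, A j i ^ 2 ≤ (⨆ k, ∑ j, |A j k|) ^ 2 := by
  have hcol : ∑ j, |A j i| ≤ ⨆ k, ∑ j, |A j k| :=
    le_ciSup (f := fun k => ∑ j, |A j k|) (Set.finite_range _).bddAbove i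
  calc ∑ j, A j i ^ 2 = ∑ j, |A j i| ^ 2 := by simp only [sq_abs]
    _ ≤ (∑ j, |A j i|) ^ 2 := sum_sq_le_sq_sum_of_nonneg fun j _ => abs_nonneg _
    _ ≤ _ := pow_le_pow_left₀ (sum_nonneg fun j _ => abs_nonneg _) hcol 2

lemma Ftau_add_single_le {m n : ℕ} (A : Matrix (Fin m) (Fin n) ℝ) (b : Fin m → ℝ)
    (chat : Fin n → ℝ) (τ : ℝ) (x : Fin n → ℝ) (i : Fin n) (t : ℝ) (hchat : |chat i| ≤ 1) :
    Ftau A b chat τ (x + Pi.single i t) ≤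
      Ftau A b chat τ x + t * FtauGrad A b chat τ x i + t ^ 2 := by
  have hdot : ∑ k, chat k * (x + Pi.single i t : Fin n → ℝ) k = ∑ k, chat k * x k + chat i * t :=
    show chat ⬝ᵥ (x + Pi.single i t) = chat ⬝ᵥ x + chat i * t by
      rw [dotProduct_add, dotProduct_single]
  have hres : ∀ j, A.mulVec (x + Pi.single i t) j - b j = (A.mulVec x j - b j) + A j i * t :=
    fun j => by simp [Matrix.mulVec_add]; ring
  have hlin : max 0 (∑ k, chat k * x k + chat i * t - τ) ^ 2 ≤
      (alphaF chat τ x + chat i * t) ^ 2 := by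
    simpa only [add_sub_right_comm, alphaF] using sq_max_zero_add_le _ (chat i * t)
  have hquad : ∑ j, ((A.mulVec x j - b j) + A j i * t) ^ 2 = ∑ j, (A.mulVec x j - b j) ^ 2 +
      2 * t * ∑ j, A j i * (A.mulVec x j - b j) + t ^ 2 * ∑ j, A j i ^ 2 := by
    rw [mul_sum, mul_sum, ← sum_add_distrib, ← sum_add_distrib]
    exact sum_congr rfl fun j _ => by ring
  have hcol : (∑ j, A j i ^ 2) / (⨆ j, ∑ i, |A i j|) ^ 2 ≤ 1 :=
    div_le_one_of_le₀ (sum_sq_col_le_sq_iSup_sum_abs A i) (sq_nonneg _)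
  have hchat_sq : chat i ^ 2 ≤ 1 := sq_le_one_iff_abs_le_one _ |>.mpr hchat
  simp only [Ftau, FtauGrad, hdot, hres, hquad]
  rw [← alphaF]
  linear_combination hlin / 2 + t ^ 2 * hcol / 2 + t ^ 2 * hchat_sq / 2

lemma Fstar_le_Ftau {m n : ℕ} (A : Matrix (Fin m) (Fin n) ℝ) (b : Fin m → ℝ)
    (u chat : Fin n → ℝ) (τ : ℝ) {y : Fin n → ℝ} (hy0 : 0 ≤ y) (hyu : y ≤ u) :
    Fstar A b u chat τ ≤ Ftau A b chat τ y := by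
  refine csInf_le ⟨0, ?_⟩ ⟨y, hy0, hyu, rfl⟩
  rintro v ⟨z, -, -, rfl⟩
  unfold Ftau
  positivity

lemma add_single_nonneg_and_le {ι : Type*} [DecidableEq ι] {x u : ι → ℝ} (hx0 : 0 ≤ x)
    (hxu : x ≤ u) {i : ι} {t : ℝ} (ht0 : 0 ≤ x i + t) (htu : x i + t ≤ u i) :
    0 ≤ x + Pi.single i t ∧ x + Pi.single i t ≤ u := by
  constructor <;> intro k <;> rcases eq_or_ne k i with rfl | hk
  · simpa using ht0
  · simpa [hk] using hx0 k
  · simpa using htu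
  · simpa [hk] using hxu k

lemma neg_le_mul_FtauGrad_add_sq {m n : ℕ} {A : Matrix (Fin m) (Fin n) ℝ} {b : Fin m → ℝ}
    {u chat : Fin n → ℝ} {τ ζ : ℝ} {x : Fin n → ℝ} (hx0 : 0 ≤ x) (hxu : x ≤ u)
    (hx : Ftau A b chat τ x ≤ Fstar A b u chat τ + ζ) {i : Fin n} (hchat : |chat i| ≤ 1)
    {t : ℝ} (ht0 : 0 ≤ x i + t) (htu : x i + t ≤ u i) :
    -ζ ≤ t * FtauGrad A b chat τ x i + t ^ 2 := by
  obtain ⟨hy0, hyu⟩ := add_single_nonneg_and_le hx0 hxu ht0 htu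
  linarith [Fstar_le_Ftau A b u chat τ hy0 hyu, Ftau_add_single_le A b chat τ x i t hchat]

lemma le_of_lt_mul_FtauGrad {m n : ℕ} {A : Matrix (Fin m) (Fin n) ℝ} {b : Fin m → ℝ}
    {u chat : Fin n → ℝ} {τ ζ : ℝ} {x : Fin n → ℝ} (hx0 : 0 ≤ x) (hxu : x ≤ u)
    (hx : Ftau A b chat τ x ≤ Fstar A b u chat τ + ζ) {i : Fin n} (hchat : |chat i| ≤ 1)
    {δ : ℝ} (hδ0 : 0 ≤ δ) (hδ : ζ + δ ^ 2 < δ * FtauGrad A b chat τ x i) :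
    x i ≤ δ := by
  by_contra! hxi
  have := neg_le_mul_FtauGrad_add_sq hx0 hxu hx hchat (t := -δ) (by linarith) (by linarith [hxu i])
  linarith

lemma sub_le_of_mul_FtauGrad_lt {m n : ℕ} {A : Matrix (Fin m) (Fin n) ℝ} {b : Fin m → ℝ}
    {u chat : Fin n → ℝ} {τ ζ : ℝ} {x : Fin n → ℝ} (hx0 : 0 ≤ x) (hxu : x ≤ u)
    (hx : Ftau A b chat τ x ≤ Fstar A b u chat τ + ζ) {i : Fin n} (hchat : |chat i| ≤ 1)
    {δ : ℝ} (hδ0 : 0 ≤ δ) (hδ : δ * FtauGrad A b chat τ x i < -(ζ + δ ^ 2)) :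
    u i - x i ≤ δ := by
  by_contra! hxi
  have hxi0 : (0 : ℝ) ≤ x i := hx0 i
  have := neg_le_mul_FtauGrad_add_sq hx0 hxu hx hchat (t := δ) (by linarith) (by linarith)
  linarith

lemma alphaF_div_mul_reducedCost {m n : ℕ} (A : Matrix (Fin m) (Fin n) ℝ) (b : Fin m → ℝ)
    (c chat : Fin n → ℝ) (τ : ℝ) (x : Fin n → ℝ) (i : Fin n) {C : ℝ} (hC : C ≠ 0)
    (hα : alphaF chat τ x ≠ 0) :
    alphaF chat τ x / C * (c i - ∑ j, A j i * (C / ((⨆ j, ∑ i, |A i j|) ^ 2 *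
      alphaF chat τ x) * (b j - A.mulVec x j))) =
      FtauGrad A b chat τ x i + alphaF chat τ x * (c i / C - chat i) := by
  set α := alphaF chat τ x
  set L2 := (⨆ j, ∑ i, |A i j|) ^ 2
  set s := ∑ j, A j i * (A.mulVec x j - b j)
  have hsum : ∑ j, A j i * (C / (L2 * α) * (b j - A.mulVec x j)) = -(C / (L2 * α) * s) := by
    rw [mul_sum, ← sum_neg_distrib]
    exact sum_congr rfl fun j _ => by ring
  have hscale : α / C * (C / (L2 * α)) = 1 / L2 := by
    rw [div_mul_div_comm, mul_comm L2 α, ← mul_assoc, mul_comm α C,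
      div_mul_cancel_left₀ (mul_ne_zero hC hα), one_div]
  rw [hsum, FtauGrad]
  linear_combination s * hscale

lemma lt_FtauGrad_of_lt_reducedCost {m n : ℕ} {A : Matrix (Fin m) (Fin n) ℝ} {b : Fin m → ℝ}
    {c chat : Fin n → ℝ} {τ ε C : ℝ} {x : Fin n → ℝ} {i : Fin n} (hC : 0 < C)
    (hα : 0 < alphaF chat τ x) (hchat : |chat i - c i / C| ≤ ε)
    (hr : 2 * ε * C < c i - ∑ j, A j i * (C / ((⨆ j, ∑ i, |A i j|) ^ 2 *
      alphaF chat τ x) * (b j - A.mulVec x j))) :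
    ε * alphaF chat τ x < FtauGrad A b chat τ x i := by
  have hscaled := mul_lt_mul_of_pos_left hr (div_pos hα hC)
  rw [alphaF_div_mul_reducedCost A b c chat τ x i hC.ne' hα.ne',
    show alphaF chat τ x / C * (2 * ε * C) = 2 * (ε * alphaF chat τ x) by field_simp] at hscaled
  have hround := mul_le_mul_of_nonneg_left (neg_le_of_abs_le hchat) hα.le
  linarith

lemma FtauGrad_lt_of_reducedCost_lt {m n : ℕ} {A : Matrix (Fin m) (Fin n) ℝ} {b : Fin m → ℝ}
    {c chat : Fin n → ℝ} {τ ε C : ℝ} {x : Fin n → ℝ} {i : Fin n} (hC : 0 < C)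
    (hα : 0 < alphaF chat τ x) (hchat : |chat i - c i / C| ≤ ε)
    (hr : c i - ∑ j, A j i * (C / ((⨆ j, ∑ i, |A i j|) ^ 2 *
      alphaF chat τ x) * (b j - A.mulVec x j)) < -(2 * ε * C)) :
    FtauGrad A b chat τ x i < -(ε * alphaF chat τ x) := by
  have hscaled := mul_lt_mul_of_pos_left hr (div_pos hα hC)
  rw [alphaF_div_mul_reducedCost A b c chat τ x i hC.ne' hα.ne',
    show alphaF chat τ x / C * -(2 * ε * C) = -(2 * (ε * alphaF chat τ x)) by field_simp] at hscaled
  have hround := mul_le_mul_of_nonneg_left (le_of_abs_le hchat) hα.le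
  linarith

lemma thetaLP_le_mul {m n : ℕ} (A : Matrix (Fin m) (Fin n) ℝ) (c u x : Fin n → ℝ)
    (π : Fin m → ℝ) {σ δ : ℝ} (hσ : 0 ≤ σ) (hδ : 0 ≤ δ)
    (hpos : ∀ i, σ < c i - ∑ j, A j i * π j → x i ≤ δ)
    (hneg : ∀ i, c i - ∑ j, A j i * π j < -σ → u i - x i ≤ δ) :
    thetaLP A c u x π σ ≤ n * δ := by
  rw [thetaLP, sum_filter, sum_filter, ← sum_add_distrib]
  calc _ ≤ ∑ _i : Fin n, δ := sum_le_sum fun i _ => by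
          split_ifs with h₁ h₂ h₂
          · linarith
          · linarith [hpos i h₁]
          · linarith [hneg i h₂]
          · linarith
    _ = n * δ := by simp

theorem theta_bound_from_potential_general {m n : ℕ} (A : Matrix (Fin m) (Fin n) ℝ)
    (b : Fin m → ℝ) (u : Fin n → ℝ)
    (c : Fin n → ℝ) (hc : c ≠ 0) (ε : ℝ) (hε : 0 < ε)
    (σ : ℝ) (hσ : σ = 2 * ε * ⨆ k, |c k|)
    (chat : Fin n → ℝ) (hchat1 : (⨆ i, |chat i|) ≤ 1)
    (hchat2 : ∀ i, abs (chat i - c i / ⨆ k, |c k|) ≤ ε)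
    (ζ : ℝ) (hζ : 0 < ζ) (τ : ℝ)
    (x : Fin n → ℝ) (hx0 : 0 ≤ x) (hxu : x ≤ u)
    (hxapprox : Ftau A b chat τ x ≤ Fstar A b u chat τ + ζ)
    (halpha : ε * alphaF chat τ x ≥ 4 * Real.sqrt ζ)
    (π : Fin m → ℝ)
    (hπ : π = fun j => ((⨆ k, |c k|) / ((⨆ j, ∑ i, |A i j|) ^ 2 * alphaF chat τ x)) *
      (b j - A.mulVec x j)) :
    thetaLP A c u x π σ ≤ n * Real.sqrt ζ / 2 := by
  subst hσ hπ
  have hsqrt : 0 < √ζ := Real.sqrt_pos.mpr hζ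
  have hα : 0 < alphaF chat τ x := pos_of_mul_pos_right (by linarith) hε.le
  obtain ⟨k, hk⟩ := Function.ne_iff.mp hc
  have hC : 0 < ⨆ k, |c k| :=
    (abs_pos.mpr hk).trans_le (le_ciSup (f := fun k => |c k|) (Set.finite_range _).bddAbove k)
  have hchat : ∀ i, |chat i| ≤ 1 := fun i =>
    (le_ciSup (f := fun k => |chat k|) (Set.finite_range _).bddAbove i).trans hchat1
  have hstep : ζ + (√ζ / 2) ^ 2 < √ζ / 2 * (ε * alphaF chat τ x) := by
    nlinarith [Real.sq_sqrt hζ.le]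
  rw [mul_div_assoc]
  refine thetaLP_le_mul A c u x _ (by positivity) (by positivity) (fun i hi => ?_) (fun i hi => ?_)
  · refine le_of_lt_mul_FtauGrad hx0 hxu hxapprox (hchat i) (by positivity) (hstep.trans ?_)
    exact mul_lt_mul_of_pos_left (lt_FtauGrad_of_lt_reducedCost hC hα (hchat2 i) hi) (by positivity)
  · refine sub_le_of_mul_FtauGrad_lt hx0 hxu hxapprox (hchat i) (by positivity) ?_
    have := mul_lt_mul_of_pos_left (FtauGrad_lt_of_reducedCost_lt hC hα (hchat2 i) hi)
      (half_pos hsqrt)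
    linarith

/-- With `σ = 2ε‖c‖_∞`, `ĉ` an `ε`-accurate rounding of `c/‖c‖_∞` with
`‖ĉ‖_∞ ≤ 1`, `x` a `ζ`-approximate minimizer of `F_τ` satisfying `ε·α(x) ≥ 4√ζ`, and
`π = (‖c‖_∞/(‖A‖₁²·α(x)))(b − Ax)`, one has `θ(x,π,σ) ≤ n√ζ/2`. -/
theorem theta_bound_from_potential {m n : ℕ} (A : Matrix (Fin m) (Fin n) ℝ)
    (hA : 0 < ⨆ j, ∑ i, |A i j|) (b : Fin m → ℝ) (u : Fin n → ℝ) (hu : 0 ≤ u)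
    (c : Fin n → ℝ) (hc : c ≠ 0) (ε : ℝ) (hε : 0 < ε)
    (σ : ℝ) (hσ : σ = 2 * ε * ⨆ k, |c k|)
    (chat : Fin n → ℝ) (hchat1 : (⨆ i, |chat i|) ≤ 1)
    (hchat2 : ∀ i, abs (chat i - c i / ⨆ k, |c k|) ≤ ε)
    (ζ : ℝ) (hζ : 0 < ζ) (τ : ℝ)
    (x : Fin n → ℝ) (hx0 : 0 ≤ x) (hxu : x ≤ u)
    (hxapprox : Ftau A b chat τ x ≤ Fstar A b u chat τ + ζ)
    (halpha : ε * alphaF chat τ x ≥ 4 * Real.sqrt ζ)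
    (π : Fin m → ℝ)
    (hπ : π = fun j => ((⨆ k, |c k|) / ((⨆ j, ∑ i, |A i j|) ^ 2 * alphaF chat τ x)) *
      (b j - A.mulVec x j)) :
    thetaLP A c u x π σ ≤ n * Real.sqrt ζ / 2 :=
  theta_bound_from_potential_general A b u c hc ε hε σ hσ chat hchat1 hchat2 ζ hζ τ x hx0 hxu
    hxapprox halpha π hπ
end
end
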